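/- Invariance of the partial synchronization manifold S₁₂: let (R₁, R₂, R₃) be a solution of the three-bubble system whose initial data lie on the partial synchronization manifold S₁₂, i.e. R₁(0) = R₂(0) and R₁'(0) = R₂'(0). Assume the uniqueness property: any two solutions of the three-bubble system that have the same values and first derivatives at t = 0 coincide on ℝ. Then the first and second bubbles oscillate in phase for all time: R₁(t) = R₂(t) for every t ∈ ℝ. -/
import Mathlib


/-- The pressure term `Pᵢ(t)` of the de Jong encapsulated-bubble model, evaluated
for one bubble with radius function `R`. The power `(R₀ / R t) ^ (3 * κ)` is the
real power (`Real.rpow`) of a positive base. -/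
noncomputable def Pterm (μ σ c κ χ κs P₀ a ω R₀ : ℝ) (R : ℝ → ℝ) (t : ℝ) : ℝ :=
  (P₀ + 2 * σ / R₀) * (R₀ / R t) ^ (3 * κ) * (1 - 3 * κ / c * deriv R t)
    - 4 * μ * deriv R t / R t - 2 * σ / R t - P₀ - a * Real.sin (ω * t)
    - 4 * χ * (1 / R₀ - 1 / R t) - 4 * κs * deriv R t / (R t) ^ 2

/-- `R` is everywhere positive and twice differentiable. -/
def Regular (R : ℝ → ℝ) : Prop :=
  (∀ t, 0 < R t) ∧ (∀ t, DifferentiableAt ℝ R t) ∧ (∀ t, DifferentiableAt ℝ (deriv R) t)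

/-- The coupling (Bjerknes interaction) term `(d/dt)(R(t)² R'(t) / d)`. -/
noncomputable def couple (d : ℝ) (R : ℝ → ℝ) (t : ℝ) : ℝ :=
  deriv (fun s => (R s) ^ 2 * deriv R s / d) t

/-- `(R 0, R 1, R 2)` is a solution of the three-bubble system:
each `R i` is twice differentiable and everywhere positive, and
`ρ (Rᵢ Rᵢ'' + (3/2) Rᵢ'²) = Pᵢ − Σ_{j ≠ i} (d/dt)(Rⱼ² Rⱼ'/d)` holds for all `t`. -/
def IsSolution (ρ μ σ c κ χ κs P₀ a ω R₀ d : ℝ) (R : Fin 3 → ℝ → ℝ) : Prop :=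
  (∀ i, Regular (R i)) ∧
    ∀ i, ∀ t : ℝ,
      ρ * (R i t * deriv (deriv (R i)) t + 3 / 2 * (deriv (R i) t) ^ 2) =
        Pterm μ σ c κ χ κs P₀ a ω R₀ (R i) t -
          ∑ j ∈ Finset.univ.erase i, couple d (R j) t

/-- **Invariance of the partial synchronization manifold `S₁₂`.**
If the initial data of a solution lie on `S₁₂` (the first two bubbles have
equal radii and radial velocities at `t = 0`), and solutions of the
three-bubble system are uniquely determined by their values and first
derivatives at `t = 0`, then the first and second bubbles oscillate in phase
for all time. -/
theorem partial_synchronization_invariant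
    (ρ μ σ c κ χ κs P₀ a ω R₀ d : ℝ)
    (hρ : 0 < ρ) (hc : 0 < c) (hR₀ : 0 < R₀) (hd : 0 < d)
    (R : Fin 3 → ℝ → ℝ)
    (hsol : IsSolution ρ μ σ c κ χ κs P₀ a ω R₀ d R)
    (hinit : R 0 0 = R 1 0) (hinit' : deriv (R 0) 0 = deriv (R 1) 0)
    (huniq : ∀ Q Q' : Fin 3 → ℝ → ℝ,
      IsSolution ρ μ σ c κ χ κs P₀ a ω R₀ d Q →
      IsSolution ρ μ σ c κ χ κs P₀ a ω R₀ d Q' →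
      (∀ i, Q i 0 = Q' i 0) → (∀ i, deriv (Q i) 0 = deriv (Q' i) 0) →
      ∀ i t, Q i t = Q' i t) :
    ∀ t : ℝ, R 0 t = R 1 t := by
  have esum : ∀ (i : Fin 3) (f : Fin 3 → ℝ),
      ∑ j ∈ Finset.univ.erase i, f j = (f 0 + f 1 + f 2) - f i := by
    intro i f
    rw [Finset.sum_erase_eq_sub (Finset.mem_univ i), Fin.sum_univ_three]
  set p : Fin 3 → Fin 3 := ![1, 0, 2] with hp
  set Q : Fin 3 → ℝ → ℝ := fun i => R (p i) with hQ
  obtain ⟨hreg, heq⟩ := hsol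
  have hsolQ : IsSolution ρ μ σ c κ χ κs P₀ a ω R₀ d Q := by
    refine ⟨fun i => hreg (p i), fun i t => ?_⟩
    fin_cases i
    · have h := heq 1 t
      rw [esum] at h ⊢
      show ρ * (R 1 t * deriv (deriv (R 1)) t + 3 / 2 * (deriv (R 1) t) ^ 2) =
        Pterm μ σ c κ χ κs P₀ a ω R₀ (R 1) t -
          (couple d (R 1) t + couple d (R 0) t + couple d (R 2) t - couple d (R 1) t)
      linarith
    · have h := heq 0 t
      rw [esum] at h ⊢
      show ρ * (R 0 t * deriv (deriv (R 0)) t + 3 / 2 * (deriv (R 0) t) ^ 2) =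
        Pterm μ σ c κ χ κs P₀ a ω R₀ (R 0) t -
          (couple d (R 1) t + couple d (R 0) t + couple d (R 2) t - couple d (R 0) t)
      linarith
    · have h := heq 2 t
      rw [esum] at h ⊢
      show ρ * (R 2 t * deriv (deriv (R 2)) t + 3 / 2 * (deriv (R 2) t) ^ 2) =
        Pterm μ σ c κ χ κs P₀ a ω R₀ (R 2) t -
          (couple d (R 1) t + couple d (R 0) t + couple d (R 2) t - couple d (R 2) t)
      linarith
  have key := huniq R Q ⟨hreg, heq⟩ hsolQ
    (by intro i; fin_cases i
        · exact hinit
        · exact hinit.symm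
        · rfl)
    (by intro i; fin_cases i
        · exact hinit'
        · exact hinit'.symm
        · rfl)
  intro t
  exact key 0 t
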